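/- arXiv:1911.04055 — 2 statements merged into one kernel-verified Lean document; each statement's English description precedes it below -/
import Mathlib

section
/- Let X, Y and Z be pairwise edge-disjoint graphs, each with at least one edge, with orderings ℓ_X, ℓ_Y and ℓ_Z respectively. Then ms(ℓ_X ∨ ℓ_Y ∨ ℓ_Z) ≥ min{ ms(ℓ_X ∨ ℓ_Y), ms(ℓ_Y ∨ ℓ_Z), |E(Y)| + ms(ℓ_X ∨ ℓ_Z) }. -/
open SimpleGraph

/-- Two edges are adjacent if they are distinct and share a vertex. -/
def EdgesAdj {V : Type*} (e e' : Sym2 V) : Prop :=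
  e ≠ e' ∧ ∃ v : V, v ∈ e ∧ v ∈ e'

/-- `ms` of an ordering of a graph, the ordering being given as the list of edges
in increasing label order: the largest `s ∈ {1,…,m}` such that any ordered pair of
adjacent edges `(e,e')` with `ℓ(e) < ℓ(e')` has forward distance at least `s`. -/
noncomputable def msList {V : Type*} (L : List (Sym2 V)) : ℕ :=
  sSup {s | 1 ≤ s ∧ s ≤ L.length ∧ ∀ i j e e', i < j →
    L[i]? = some e → L[j]? = some e' → EdgesAdj e e' → s ≤ j - i}

/-- `cms` of an ordering of a graph: the largest `s ∈ {1,…,m}` such that every pair of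
adjacent edges is at cyclic distance at least `s`. -/
noncomputable def cmsList {V : Type*} (L : List (Sym2 V)) : ℕ :=
  sSup {s | 1 ≤ s ∧ s ≤ L.length ∧ ∀ i j e e', i < j →
    L[i]? = some e → L[j]? = some e' → EdgesAdj e e' →
    s ≤ min (j - i) (L.length - (j - i))}

/-- `L` is an ordering of `G`: it lists every edge of `G` exactly once. -/
def IsOrdering {V : Type*} (G : SimpleGraph V) (L : List (Sym2 V)) : Prop :=
  L.Nodup ∧ ∀ e, e ∈ L ↔ e ∈ G.edgeSet

/-- Cyclic matching sequenceability of a graph: the maximum of `cmsList` over orderings. -/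
noncomputable def cms {V : Type*} (G : SimpleGraph V) : ℕ :=
  sSup {k | ∃ L, IsOrdering G L ∧ cmsList L = k}

/-- Number of edges of a graph. -/
noncomputable def numEdges {V : Type*} (G : SimpleGraph V) : ℕ :=
  Nat.card G.edgeSet

/-- The chromatic index: the least number of colours in a proper edge colouring. -/
noncomputable def chromaticIndex {V : Type*} (G : SimpleGraph V) : ℕ :=
  sInf {c | ∃ f : G.edgeSet → Fin c, ∀ e e' : G.edgeSet, EdgesAdj e.1 e'.1 → f e ≠ f e'}

/-- The edge set of `G` forms a matching (no two distinct edges share a vertex). -/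
def IsMatchingGraph {V : Type*} (G : SimpleGraph V) : Prop :=
  ∀ e ∈ G.edgeSet, ∀ e' ∈ G.edgeSet, ¬ EdgesAdj e e'

/-- `G` is regular of degree `d`. -/
def IsRegularGraph {V : Type*} (G : SimpleGraph V) (d : ℕ) : Prop :=
  ∀ v : V, Nat.card (G.neighborSet v) = d

/-- A finite set of edges of `G` forming a matching. -/
def IsMatchingSet {V : Type*} (G : SimpleGraph V) (M : Finset (Sym2 V)) : Prop :=
  ↑M ⊆ G.edgeSet ∧ ∀ e ∈ M, ∀ e' ∈ M, ¬ EdgesAdj e e'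

/-- The matching number of a graph. -/
noncomputable def matchingNumber {V : Type*} (G : SimpleGraph V) : ℕ :=
  sSup {k | ∃ M : Finset (Sym2 V), IsMatchingSet G M ∧ M.card = k}

def AdjSeparated {V : Type*} (L : List (Sym2 V)) (s : ℕ) : Prop :=
  ∀ i j e e', i < j → L[i]? = some e → L[j]? = some e' → EdgesAdj e e' → s ≤ j - i

section AdjSeparated

variable {V : Type*}

lemma AdjSeparated.mono {L : List (Sym2 V)} {s t : ℕ} (hs : AdjSeparated L s) (hts : t ≤ s) :
    AdjSeparated L t :=
  fun i j e e' hij hi hj hadj => hts.trans (hs i j e e' hij hi hj hadj)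

lemma adjSeparated_zero (L : List (Sym2 V)) : AdjSeparated L 0 :=
  fun _ _ _ _ _ _ _ _ => Nat.zero_le _

lemma msList_eq_sSup (L : List (Sym2 V)) :
    msList L = sSup {s | 1 ≤ s ∧ s ≤ L.length ∧ AdjSeparated L s} :=
  rfl

lemma msList_le_length (L : List (Sym2 V)) : msList L ≤ L.length :=
  csSup_le' fun _ hs => hs.2.1

lemma adjSeparated_msList (L : List (Sym2 V)) : AdjSeparated L (msList L) := by
  rw [msList_eq_sSup]
  by_cases hne : {s | 1 ≤ s ∧ s ≤ L.length ∧ AdjSeparated L s}.Nonempty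
  · exact (Nat.sSup_mem hne ⟨L.length, fun _ hs => hs.2.1⟩).2.2
  · rw [Set.not_nonempty_iff_eq_empty.mp hne, csSup_empty]
    exact adjSeparated_zero L

lemma le_msList {L : List (Sym2 V)} {s : ℕ} (hlen : s ≤ L.length) (hs : AdjSeparated L s) :
    s ≤ msList L := by
  rcases Nat.eq_zero_or_pos s with rfl | hpos
  · exact Nat.zero_le _
  · exact le_csSup ⟨L.length, fun _ ht => ht.2.1⟩ ⟨hpos, hlen, hs⟩

/-- A pair of positions of `X ++ Y ++ Z` lies in `X ++ Y`, lies in `Y ++ Z`, or straddles `Y`;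
in the last case its distance is `|Y|` plus the distance of the corresponding pair in `X ++ Z`. -/
lemma AdjSeparated.append_three {X Y Z : List (Sym2 V)} {s t : ℕ}
    (hXY : AdjSeparated (X ++ Y) s) (hYZ : AdjSeparated (Y ++ Z) s)
    (hXZ : AdjSeparated (X ++ Z) t) (hst : s ≤ Y.length + t) :
    AdjSeparated (X ++ Y ++ Z) s := by
  intro i j e e' hij hi hj hadj
  by_cases hjXY : j < X.length + Y.length
  · rw [List.getElem?_append_left (by rw [List.length_append]; omega)] at hi hj
    exact hXY i j e e' hij hi hj hadj
  by_cases hiX : i < X.length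
  · rw [List.getElem?_append_left (by rw [List.length_append]; omega),
      List.getElem?_append_left hiX] at hi
    rw [List.getElem?_append_right (by rw [List.length_append]; omega), List.length_append] at hj
    have hi' : (X ++ Z)[i]? = some e := by rwa [List.getElem?_append_left hiX]
    have hj' : (X ++ Z)[j - Y.length]? = some e' := by
      rwa [List.getElem?_append_right (by omega), Nat.sub_sub, Nat.add_comm Y.length]
    have := hXZ i (j - Y.length) e e' (by omega) hi' hj' hadj
    omega
  · rw [List.append_assoc, List.getElem?_append_right (by omega)] at hi hj
    have := hYZ (i - X.length) (j - X.length) e e' (by omega) hi hj hadj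
    omega

end AdjSeparated

lemma numEdges_eq_length {V : Type*} {G : SimpleGraph V} {L : List (Sym2 V)}
    (hL : IsOrdering G L) : numEdges G = L.length := by
  classical
  have hset : G.edgeSet = ↑L.toFinset := by
    ext e
    simp [← hL.2 e]
  rw [numEdges, hset, Nat.card_coe_set_eq, Set.ncard_coe_finset,
    List.toFinset_card_of_nodup hL.1]

theorem msList_append_three_general {V : Type*} (Y : SimpleGraph V)
    (LX LY LZ : List (Sym2 V))
    (hLY : IsOrdering Y LY) :
    min (msList (LX ++ LY)) (min (msList (LY ++ LZ)) (numEdges Y + msList (LX ++ LZ)))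
      ≤ msList (LX ++ LY ++ LZ) := by
  set m := min (msList (LX ++ LY)) (min (msList (LY ++ LZ)) (numEdges Y + msList (LX ++ LZ)))
  have hmXY : m ≤ msList (LX ++ LY) := min_le_left _ _
  have hmYZ : m ≤ msList (LY ++ LZ) := (min_le_right _ _).trans (min_le_left _ _)
  have hmXZ : m ≤ LY.length + msList (LX ++ LZ) :=
    numEdges_eq_length hLY ▸ (min_le_right _ _).trans (min_le_right _ _)
  refine le_msList ?_ <| ((adjSeparated_msList _).mono hmXY).append_three
    ((adjSeparated_msList _).mono hmYZ) (adjSeparated_msList _) hmXZ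
  calc m ≤ (LX ++ LY).length := hmXY.trans (msList_le_length _)
    _ ≤ (LX ++ LY ++ LZ).length := by simp

/-- Lemma: for pairwise edge-disjoint graphs `X`, `Y`, `Z` with orderings `ℓ_X`, `ℓ_Y`,
`ℓ_Z`, we have
`ms(ℓ_X ∨ ℓ_Y ∨ ℓ_Z) ≥ min{ms(ℓ_X ∨ ℓ_Y), ms(ℓ_Y ∨ ℓ_Z), |E(Y)| + ms(ℓ_X ∨ ℓ_Z)}`. -/
theorem msList_append_three {V : Type*} [Fintype V] (X Y Z : SimpleGraph V)
    (LX LY LZ : List (Sym2 V))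
    (hXY : Disjoint X.edgeSet Y.edgeSet) (hYZ : Disjoint Y.edgeSet Z.edgeSet)
    (hXZ : Disjoint X.edgeSet Z.edgeSet)
    (hXne : X.edgeSet.Nonempty) (hYne : Y.edgeSet.Nonempty) (hZne : Z.edgeSet.Nonempty)
    (hLX : IsOrdering X LX) (hLY : IsOrdering Y LY) (hLZ : IsOrdering Z LZ) :
    min (msList (LX ++ LY)) (min (msList (LY ++ LZ)) (numEdges Y + msList (LX ++ LZ)))
      ≤ msList (LX ++ LY ++ LZ) :=
  msList_append_three_general Y LX LY LZ hLY
end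

section
/- Let X and Y be edge-disjoint matchings, each with at least one edge, and let ℓ_Y be a fixed ordering of Y. Then there is an ordering ℓ_X of X such that ms(ℓ_X ∨ ℓ_Y) ≥ |E(X)|/2. -/
open SimpleGraph

/-!
Sort the edges of `X` by the position in `ℓ_Y` of the first edge of `Y` meeting them. If the
`i`-th edge of `ℓ_X` meets the `k`-th edge of `ℓ_Y`, then each of the first `i + 1` edges of `ℓ_X`
meets one of the first `k + 1` edges of `ℓ_Y`; as `X` is a matching, an edge of `Y` meets at most
two edges of `X`, so `i + 1 ≤ 2 (k + 1)` and the forward distance `m + k - i` is at least `⌈m / 2⌉`,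
where `m = |E(X)|`.
Adjacent pairs inside `ℓ_X` or inside `ℓ_Y` do not exist because both are matchings.
-/

open Classical in
/-- Equals `L.length` when no edge of `L` is adjacent to `e`. -/
noncomputable def firstAdjIndex {V : Type*} (L : List (Sym2 V)) (e : Sym2 V) : ℕ :=
  L.findIdx fun y => decide (EdgesAdj e y)

section

variable {V : Type*}

lemma firstAdjIndex_le_of_edgesAdj {L : List (Sym2 V)} {e : Sym2 V} {k : ℕ}
    (hk : k < L.length) (h : EdgesAdj e L[k]) : firstAdjIndex L e ≤ k := by
  by_contra! hlt
  simpa [h] using List.not_of_lt_findIdx hlt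

lemma edgesAdj_getElem_firstAdjIndex {L : List (Sym2 V)} {e : Sym2 V}
    (h : firstAdjIndex L e < L.length) : EdgesAdj e L[firstAdjIndex L e] := by
  classical
  exact of_decide_eq_true (List.findIdx_getElem (p := fun y => decide (EdgesAdj e y)) (w := h))

lemma IsOrdering.length_eq_numEdges {G : SimpleGraph V} {L : List (Sym2 V)}
    (h : IsOrdering G L) : L.length = numEdges G := by
  classical
  have hset : G.edgeSet = ↑L.toFinset := by ext e; simp [h.2 e]
  rw [numEdges, hset, Nat.card_coe_set_eq, Set.ncard_coe_finset, List.toFinset_card_of_nodup h.1]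

lemma exists_isOrdering_pairwise_le {β : Type*} [LinearOrder β] (G : SimpleGraph V)
    [Finite G.edgeSet] (f : Sym2 V → β) :
    ∃ L, IsOrdering G L ∧ L.Pairwise fun a b => f a ≤ f b := by
  set L₀ := G.edgeSet.toFinite.toFinset.toList
  have hperm := List.mergeSort_perm L₀ fun a b => decide (f a ≤ f b)
  refine ⟨_, ⟨hperm.nodup_iff.mpr (Finset.nodup_toList _), fun e => by simp [hperm.mem_iff, L₀]⟩,
    ?_⟩
  simpa using List.pairwise_mergeSort (le := fun a b => decide (f a ≤ f b))
    (fun a b c hab hbc => by simpa using le_trans (by simpa using hab) (by simpa using hbc))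
    (fun a b => by simpa using le_total (f a) (f b)) L₀

lemma le_msList_s7 {L : List (Sym2 V)} {s : ℕ} (hs : s ≤ L.length)
    (h : ∀ i j e e', i < j → L[i]? = some e → L[j]? = some e' → EdgesAdj e e' → s ≤ j - i) :
    s ≤ msList L := by
  rcases s.eq_zero_or_pos with rfl | hpos
  · exact Nat.zero_le _
  · exact le_csSup ⟨L.length, fun _ hs' => hs'.2.1⟩ ⟨hpos, hs, h⟩

variable {X Y : SimpleGraph V}

lemma IsMatchingGraph.card_le_two (hX : IsMatchingGraph X) (y : Sym2 V) {S : Finset (Sym2 V)}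
    (hSX : ∀ x ∈ S, x ∈ X.edgeSet) (hSy : ∀ x ∈ S, ∃ v, v ∈ x ∧ v ∈ y) : S.card ≤ 2 := by
  classical
  induction y using Sym2.ind with | _ v w => ?_
  set c : Sym2 V → V := fun x => if v ∈ x then v else w
  have hc : ∀ x ∈ S, c x ∈ x := by
    intro x hx
    obtain ⟨u, hux, huy⟩ := hSy x hx
    by_cases hv : v ∈ x
    · simp [c, hv]
    · rcases Sym2.mem_iff.mp huy with rfl | rfl
      · exact absurd hux hv
      · simpa [c, hv]
  calc S.card ≤ ({v, w} : Finset V).card := by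
        refine Finset.card_le_card_of_injOn c (fun x _ => by by_cases hv : v ∈ x <;> simp [c, hv])
          fun x hx x' hx' hcc => ?_
        by_contra hne
        exact hX x (hSX x hx) x' (hSX x' hx') ⟨hne, c x, hc x hx, hcc ▸ hc x' hx'⟩
    _ ≤ 2 := Finset.card_le_two

lemma IsMatchingGraph.card_le_of_firstAdjIndex_le (hX : IsMatchingGraph X) {LY : List (Sym2 V)}
    {S : Finset (Sym2 V)} (hSX : ∀ x ∈ S, x ∈ X.edgeSet) {k : ℕ} (hk : k < LY.length)
    (hS : ∀ x ∈ S, firstAdjIndex LY x ≤ k) : S.card ≤ 2 * (k + 1) := by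
  classical
  have hfiber : ∀ t ∈ Finset.range (k + 1), (S.filter (firstAdjIndex LY · = t)).card ≤ 2 := by
    intro t ht
    have htY : t < LY.length := Nat.lt_of_lt_of_le (Finset.mem_range.mp ht) hk
    refine hX.card_le_two LY[t] (fun x hx => hSX x (Finset.mem_filter.mp hx).1) fun x hx => ?_
    obtain ⟨-, rfl⟩ := Finset.mem_filter.mp hx
    exact (edgesAdj_getElem_firstAdjIndex htY).2
  simpa using Finset.card_le_mul_card_image_of_maps_to
    (fun x hx => Finset.mem_range.mpr (Nat.lt_succ_of_le (hS x hx))) 2 hfiber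

lemma IsMatchingGraph.le_two_mul_of_edgesAdj (hX : IsMatchingGraph X) {LX LY : List (Sym2 V)}
    (hnd : LX.Nodup) (hLX : ∀ e ∈ LX, e ∈ X.edgeSet)
    (hsorted : LX.Pairwise fun a b => firstAdjIndex LY a ≤ firstAdjIndex LY b)
    {i k : ℕ} (hi : i < LX.length) (hk : k < LY.length) (hadj : EdgesAdj LX[i] LY[k]) :
    i + 1 ≤ 2 * (k + 1) := by
  classical
  set S := (LX.take (i + 1)).toFinset
  have hcard : S.card = i + 1 := by
    rw [List.toFinset_card_of_nodup (hnd.sublist (List.take_sublist _ _)), List.length_take]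
    omega
  have hS : ∀ x ∈ S, firstAdjIndex LY x ≤ k := by
    intro x hx
    obtain ⟨t, ht, rfl⟩ := List.getElem_of_mem (List.mem_toFinset.mp hx)
    rw [List.length_take] at ht
    rw [List.getElem_take]
    refine le_trans ?_ (firstAdjIndex_le_of_edgesAdj hk hadj)
    obtain hlt | rfl : t < i ∨ t = i := by omega
    · exact List.pairwise_iff_getElem.mp hsorted t i _ hi hlt
    · exact le_rfl
  exact hcard ▸ hX.card_le_of_firstAdjIndex_le
    (fun x hx => hLX x (List.mem_of_mem_take (List.mem_toFinset.mp hx))) hk hS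

lemma half_length_le_sub_of_edgesAdj_append
    (hX : IsMatchingGraph X) (hY : IsMatchingGraph Y) {LX LY : List (Sym2 V)}
    (hnd : LX.Nodup) (hLX : ∀ e ∈ LX, e ∈ X.edgeSet) (hLY : ∀ e ∈ LY, e ∈ Y.edgeSet)
    (hsorted : LX.Pairwise fun a b => firstAdjIndex LY a ≤ firstAdjIndex LY b)
    {i j : ℕ} {e e' : Sym2 V} (hij : i < j) (hi : (LX ++ LY)[i]? = some e)
    (hj : (LX ++ LY)[j]? = some e') (hadj : EdgesAdj e e') :
    (LX.length + 1) / 2 ≤ j - i := by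
  rcases Nat.lt_or_ge j LX.length with hjX | hjY
  · rw [List.getElem?_append_left (hij.trans hjX)] at hi
    rw [List.getElem?_append_left hjX] at hj
    exact absurd hadj <|
      hX e (hLX e (List.mem_of_getElem? hi)) e' (hLX e' (List.mem_of_getElem? hj))
  rcases Nat.lt_or_ge i LX.length with hiX | hiY
  · rw [List.getElem?_append_left hiX] at hi
    rw [List.getElem?_append_right hjY] at hj
    obtain ⟨hk, rfl⟩ := List.getElem?_eq_some_iff.mp hj
    obtain ⟨_, rfl⟩ := List.getElem?_eq_some_iff.mp hi
    have := hX.le_two_mul_of_edgesAdj hnd hLX hsorted hiX hk hadj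
    omega
  · rw [List.getElem?_append_right hiY] at hi
    rw [List.getElem?_append_right hjY] at hj
    exact absurd hadj <|
      hY e (hLY e (List.mem_of_getElem? hi)) e' (hLY e' (List.mem_of_getElem? hj))

end

theorem exists_ordering_msList_ge_half_general {V : Type*} [Fintype V] (X Y : SimpleGraph V)
    (LY : List (Sym2 V))
    (hX : IsMatchingGraph X) (hY : IsMatchingGraph Y)
    (hLY : IsOrdering Y LY) :
    ∃ LX : List (Sym2 V), IsOrdering X LX ∧
      (numEdges X : ℝ) / 2 ≤ (msList (LX ++ LY) : ℝ) := by
  obtain ⟨LX, hLX, hsorted⟩ := exists_isOrdering_pairwise_le X (firstAdjIndex LY)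
  refine ⟨LX, hLX, ?_⟩
  have hms : (LX.length + 1) / 2 ≤ msList (LX ++ LY) :=
    le_msList_s7 (by rw [List.length_append]; omega) fun _ _ _ _ hij hi hj hadj =>
      half_length_le_sub_of_edgesAdj_append hX hY hLX.1 (fun e => (hLX.2 e).1)
        (fun e => (hLY.2 e).1) hsorted hij hi hj hadj
  rw [← hLX.length_eq_numEdges, div_le_iff₀ two_pos]
  exact_mod_cast (by omega : LX.length ≤ msList (LX ++ LY) * 2)

/-- Lemma: let `X` and `Y` be edge-disjoint matchings and `ℓ_Y` a fixed ordering of `Y`.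
Then there is an ordering `ℓ_X` of `X` such that `ms(ℓ_X ∨ ℓ_Y) ≥ |E(X)|/2`. -/
theorem exists_ordering_msList_ge_half {V : Type*} [Fintype V] (X Y : SimpleGraph V)
    (LY : List (Sym2 V))
    (hX : IsMatchingGraph X) (hY : IsMatchingGraph Y)
    (hdisj : Disjoint X.edgeSet Y.edgeSet)
    (hXne : X.edgeSet.Nonempty) (hYne : Y.edgeSet.Nonempty)
    (hLY : IsOrdering Y LY) :
    ∃ LX : List (Sym2 V), IsOrdering X LX ∧
      (numEdges X : ℝ) / 2 ≤ (msList (LX ++ LY) : ℝ) :=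
  exists_ordering_msList_ge_half_general X Y LY hX hY hLY
end
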